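/- arXiv:math/9912234 — 3 statements merged into one kernel-verified Lean document; each statement's English description precedes it below -/
import Mathlib

section
/- If G is a connected square-stable graph that is not complete, then for every maximum stable set S of G² and every vertex a ∈ S, there exists b ∈ S with dist_G(a,b) = 3. -/
open SimpleGraph

attribute [local instance] Classical.propDecidable

variable {V : Type*}

/-- A stable (independent) set: pairwise non-adjacent vertices. -/
def IsStable (G : SimpleGraph V) (S : Finset V) : Prop :=
  ∀ ⦃a⦄, a ∈ S → ∀ ⦃b⦄, b ∈ S → ¬ G.Adj a b

/-- The stability (independence) number α(G). -/
noncomputable def alpha [Fintype V] (G : SimpleGraph V) : ℕ :=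
  (Finset.univ.powerset.filter (fun S => IsStable G S)).sup Finset.card

/-- A maximum stable set, i.e. a member of Ω(G). -/
def IsMaxStable [Fintype V] (G : SimpleGraph V) (S : Finset V) : Prop :=
  IsStable G S ∧ S.card = alpha G

/-- The square G² of a graph: distinct vertices adjacent iff at distance ≤ 2. -/
def square (G : SimpleGraph V) : SimpleGraph V where
  Adj u v := u ≠ v ∧ (G.Adj u v ∨ ∃ w, G.Adj u w ∧ G.Adj w v)
  symm := by
    constructor
    rintro u v ⟨h, h2⟩
    refine ⟨h.symm, ?_⟩
    rcases h2 with h2 | ⟨w, hw1, hw2⟩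
    · exact Or.inl h2.symm
    · exact Or.inr ⟨w, hw2.symm, hw1.symm⟩
  loopless := by constructor; rintro u ⟨h, _⟩; exact h rfl

/-- G is α-square-stable if α(G) = α(G²). -/
def SquareStable [Fintype V] (G : SimpleGraph V) : Prop :=
  alpha G = alpha (square G)

/-- The maximum matching size μ(G). -/
noncomputable def mu [Fintype V] (G : SimpleGraph V) : ℕ :=
  sSup {n | ∃ M : G.Subgraph, M.IsMatching ∧ M.verts.ncard = 2 * n}

/-- f realizes a matching of A into S: it sends each a ∈ A to a distinct
neighbour in S (so the corresponding edges form a matching ⊆ (A,S) saturating A). -/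
def MatchedInto (G : SimpleGraph V) (A S : Finset V) (f : V → V) : Prop :=
  (∀ a ∈ A, f a ∈ S ∧ G.Adj a (f a)) ∧ ∀ a ∈ A, ∀ b ∈ A, f a = f b → a = b

/-- Well-covered: no isolated vertices, and every maximal stable set is maximum. -/
def WellCovered [Fintype V] (G : SimpleGraph V) : Prop :=
  (∀ v : V, ∃ w, G.Adj v w) ∧
    ∀ S : Finset V, IsStable G S → (∀ T : Finset V, IsStable G T → S ⊆ T → S = T) →
      S.card = alpha G

/-- Very well-covered: well-covered and |V(G)| = 2α(G). -/
def VeryWellCovered [Fintype V] (G : SimpleGraph V) : Prop :=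
  WellCovered G ∧ Fintype.card V = 2 * alpha G

/-- The set of pendant (degree-one) vertices of G. -/
noncomputable def pendants [Fintype V] (G : SimpleGraph V) : Finset V :=
  Finset.univ.filter (fun v => G.degree v = 1)

/-- G has a perfect matching consisting of pendant edges. -/
def HasPendantPerfectMatching [Fintype V] (G : SimpleGraph V) : Prop :=
  ∃ M : G.Subgraph, M.IsPerfectMatching ∧
    ∀ a b : V, M.Adj a b → G.degree a = 1 ∨ G.degree b = 1

/-- The star K_{1,n}: vertex 0 is the center, adjacent to n leaves. -/
def starGraph (n : ℕ) : SimpleGraph (Fin (n + 1)) where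
  Adj u v := u ≠ v ∧ (u = 0 ∨ v = 0)
  symm := by constructor; rintro u v ⟨h1, h2⟩; exact ⟨h1.symm, h2.symm⟩
  loopless := by constructor; rintro u ⟨h, _⟩; exact h rfl

/-! A maximum stable set `S` of `G²` is stable in `G` and, by square-stability, of size `α(G)`;
so it is a maximum stable set of `G` and dominates `G`. Non-completeness gives `α(G) ≥ 2`, hence a
second vertex `c ∈ S`, at distance at least 3 from `a`. A vertex `y` at distance 2 from `a` lies
outside `S`, so it has a neighbour `b ∈ S`; then `b ≠ a` and `dist(a, b) ≤ 3`, while stability of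
`S` in `G²` forces `dist(a, b) ≥ 3`. -/

lemma le_square (G : SimpleGraph V) : G ≤ square G :=
  fun _ _ h => ⟨G.ne_of_adj h, Or.inl h⟩

lemma square_adj_iff_dist_le_two {G : SimpleGraph V} {u v : V} (h : G.Reachable u v) :
    (square G).Adj u v ↔ u ≠ v ∧ G.dist u v ≤ 2 := by
  have hedist : G.dist u v ≤ 2 ↔ ¬ 2 < G.edist u v := by
    rw [← h.coe_dist_eq_edist, not_lt]
    exact_mod_cast Iff.rfl
  rw [hedist, two_lt_edist_iff, Set.eq_empty_iff_forall_notMem]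
  simp only [square, mem_commonNeighbors]
  grind [Adj.symm]

lemma SimpleGraph.Reachable.exists_dist_eq {G : SimpleGraph V} {u v : V} (h : G.Reachable u v)
    {n : ℕ} (hn : n ≤ G.dist u v) : ∃ w, G.dist u w = n := by
  obtain ⟨p, hp⟩ := h.exists_walk_length_eq_dist
  refine ⟨p.getVert n, le_antisymm ?_ ?_⟩
  · exact (dist_le (p.take n)).trans (by simp [Walk.take_length])
  · have hdrop := dist_le (p.drop n)
    have htri := (p.take n).reachable.dist_triangle_left v
    rw [Walk.drop_length] at hdrop
    omega

namespace IsStable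

variable {G H : SimpleGraph V} {S : Finset V}

lemma anti (hGH : G ≤ H) (hS : IsStable H S) : IsStable G S :=
  fun _ ha _ hb hab => hS ha hb (hGH hab)

lemma card_le_alpha [Fintype V] (hS : IsStable G S) : S.card ≤ alpha G :=
  Finset.le_sup (by simp [hS])

lemma insert_of_forall_not_adj {v : V} (hS : IsStable G S) (hv : ∀ s ∈ S, ¬ G.Adj v s) :
    IsStable G (insert v S) := by
  intro x hx y hy hxy
  rcases Finset.mem_insert.mp hx with rfl | hxS <;> rcases Finset.mem_insert.mp hy with rfl | hyS
  · exact G.irrefl hxy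
  · exact hv y hyS hxy
  · exact hv x hxS hxy.symm
  · exact hS hxS hyS hxy

lemma exists_adj_of_card_eq_alpha [Fintype V] (hS : IsStable G S) (hcard : S.card = alpha G)
    {v : V} (hv : v ∉ S) : ∃ s ∈ S, G.Adj v s := by
  by_contra! hno
  have := (hS.insert_of_forall_not_adj hno).card_le_alpha
  rw [Finset.card_insert_of_notMem hv] at this
  omega

lemma three_le_dist (hc : G.Connected) (hS : IsStable (square G) S) {a b : V} (ha : a ∈ S)
    (hb : b ∈ S) (hab : a ≠ b) : 3 ≤ G.dist a b := by
  have hnadj := (square_adj_iff_dist_le_two (hc a b)).not.mp (hS ha hb)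
  exact not_le.mp (not_and.mp hnadj hab)

end IsStable

lemma two_le_alpha [Fintype V] {G : SimpleGraph V} {u v : V} (huv : u ≠ v)
    (hnadj : ¬ G.Adj u v) : 2 ≤ alpha G := by
  have hst : IsStable G {u, v} := by
    intro x hx y hy hxy
    simp only [Finset.mem_insert, Finset.mem_singleton] at hx hy
    rcases hx with rfl | rfl <;> rcases hy with rfl | rfl
    · exact G.irrefl hxy
    · exact hnadj hxy
    · exact hnadj hxy.symm
    · exact G.irrefl hxy
  simpa [Finset.card_pair huv] using hst.card_le_alpha

/-- In a connected non-complete square-stable graph, every vertex of a maximum stable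
set of G² has another vertex of that set at distance exactly 3. -/
theorem stmt6 [Fintype V] (G : SimpleGraph V) (hc : G.Connected)
    (hs : SquareStable G) (hnc : ∃ u v : V, u ≠ v ∧ ¬ G.Adj u v) :
    ∀ S : Finset V, IsMaxStable (square G) S →
      ∀ a ∈ S, ∃ b ∈ S, G.dist a b = 3 := by
  rintro S ⟨hS, hScard⟩ a ha
  have hSG : IsStable G S := hS.anti (le_square G)
  have hcard : S.card = alpha G := hScard.trans hs.symm
  obtain ⟨u, v, huv, hnadj⟩ := hnc
  have hα := two_le_alpha huv hnadj
  obtain ⟨c, hcS, hca⟩ := Finset.exists_mem_ne (show 1 < S.card by omega) a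
  obtain ⟨y, hy⟩ := (hc a c).exists_dist_eq (n := 2)
    ((by norm_num : 2 ≤ 3).trans (hS.three_le_dist hc ha hcS hca.symm))
  have hyS : y ∉ S := fun hyS =>
    hS ha hyS ((square_adj_iff_dist_le_two (hc a y)).mpr ⟨by rintro rfl; simp at hy, hy.le⟩)
  obtain ⟨s, hsS, hys⟩ := hSG.exists_adj_of_card_eq_alpha hcard hyS
  have hsa : s ≠ a := by
    rintro rfl
    simp [dist_eq_one_iff_adj.mpr hys.symm] at hy
  refine ⟨s, hsS, le_antisymm ?_ (hS.three_le_dist hc ha hsS hsa.symm)⟩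
  calc G.dist a s ≤ G.dist a y + G.dist y s := hc.dist_triangle
    _ = 3 := by rw [hy, dist_eq_one_iff_adj.mpr hys]
end

section
/- If G is square-stable, then for every maximum stable set S₁ of G and every maximum stable set S₂ of G², the induced subgraph G[S₁ △ S₂] has a unique perfect matching, and this matching is induced (no edge of G joins two distinct matching edges). -/
open SimpleGraph

attribute [local instance] Classical.propDecidable

variable {V : Type*}

/-!
Both `S₁` and `S₂` are stable in `G` and have `α(G)` vertices. Put `A = S₁ \ S₂` and
`B = S₂ \ S₁`, so `|A| = |B|`. By maximality of `S₁` every `b ∈ B` has a neighbour in `A`, while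
stability of `S₂` in `G²` says that no vertex has two neighbours in `S₂`. Hence picking a neighbour
in `A` is an injection `B → A` between sets of equal size, thus a bijection, and `G[A ∪ B]` is
`1`-regular: it is itself a perfect matching, which is therefore the only one and is induced.
-/

namespace SimpleGraph.Subgraph

variable {G : SimpleGraph V}

lemma isMatching_induce_top_iff {s : Set V} :
    ((⊤ : G.Subgraph).induce s).IsMatching ↔ ∀ v ∈ s, ∃! w, w ∈ s ∧ G.Adj v w := by
  simp only [IsMatching, induce_verts, induce_adj, top_adj]
  exact forall₂_congr fun _ _ => existsUnique_congr fun w => by tauto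

lemma IsMatching.eq_of_le_of_verts_eq {M N : G.Subgraph} (hN : N.IsMatching)
    (hM : M.IsMatching) (hle : N ≤ M) (hverts : N.verts = M.verts) : N = M := by
  refine le_antisymm hle ⟨hverts.ge, fun x y hxy => ?_⟩
  obtain ⟨w, hxw, -⟩ := hN (hverts ▸ hxy.fst_mem)
  rwa [hM.eq_of_adj_left hxy (hle.2 hxw)]

lemma IsMatching.not_adj_of_induce_top {s : Set V}
    (hM : ((⊤ : G.Subgraph).induce s).IsMatching) {a b c d : V}
    (hab : ((⊤ : G.Subgraph).induce s).Adj a b) (hcd : ((⊤ : G.Subgraph).induce s).Adj c d)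
    (had : a ≠ d) : ¬ G.Adj a c := by
  intro hGac
  have hac' : ((⊤ : G.Subgraph).induce s).Adj a c := ⟨hab.1, hcd.1, hGac⟩
  obtain rfl := hM.eq_of_adj_left hab hac'
  exact had (hM.eq_of_adj_left hac'.symm hcd)

end SimpleGraph.Subgraph

section Stable

variable {G : SimpleGraph V} {S : Finset V}

lemma IsStable.subset {T : Finset V} (hS : IsStable G S) (hTS : T ⊆ S) : IsStable G T :=
  fun _ ha _ hb => hS (hTS ha) (hTS hb)

lemma IsStable.card_le_alpha_s10 [Fintype V] (hS : IsStable G S) : S.card ≤ alpha G :=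
  Finset.le_sup (Finset.mem_filter.mpr ⟨Finset.mem_powerset.mpr S.subset_univ, hS⟩)

lemma IsStable.of_square (hS : IsStable (square G) S) : IsStable G S :=
  fun _ ha _ hb hab => hS ha hb ⟨hab.ne, Or.inl hab⟩

lemma IsStable.eq_of_adj_of_adj_of_square (hS : IsStable (square G) S) {v b b' : V}
    (hb : b ∈ S) (hb' : b' ∈ S) (hvb : G.Adj v b) (hvb' : G.Adj v b') : b = b' := by
  by_contra hne
  exact hS hb hb' ⟨hne, Or.inr ⟨v, hvb.symm, hvb'⟩⟩

lemma IsMaxStable.exists_adj_of_notMem [Fintype V] (hS : IsMaxStable G S) {v : V}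
    (hv : v ∉ S) : ∃ a ∈ S, G.Adj v a := by
  by_contra! hno
  have hstable : IsStable G (insert v S) := by
    intro x hx y hy hxy
    rcases Finset.mem_insert.mp hx with rfl | hxS <;> rcases Finset.mem_insert.mp hy with rfl | hyS
    · exact hxy.ne rfl
    · exact hno y hyS hxy
    · exact hno x hxS hxy.symm
    · exact hS.1 hxS hyS hxy
  have := hstable.card_le_alpha_s10
  rw [Finset.card_insert_of_notMem hv, hS.2] at this
  omega

end Stable

section Bipartite

variable {G : SimpleGraph V} {A B : Finset V}

lemma existsUnique_adj_of_card_le (hcard : A.card ≤ B.card)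
    (hB : ∀ b ∈ B, ∃ a ∈ A, G.Adj b a)
    (hA : ∀ a ∈ A, ∀ b ∈ B, ∀ b' ∈ B, G.Adj a b → G.Adj a b' → b = b') :
    (∀ a ∈ A, ∃! b, b ∈ B ∧ G.Adj a b) ∧ ∀ b ∈ B, ∃! a, a ∈ A ∧ G.Adj b a := by
  choose f hfA hfadj using hB
  have hfinj : ∀ b (hb : b ∈ B) b' (hb' : b' ∈ B), f b hb = f b' hb' → b = b' :=
    fun b hb b' hb' heq => hA _ (hfA b hb) b hb b' hb' (hfadj b hb).symm (heq ▸ (hfadj b' hb').symm)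
  have hfsurj : ∀ a ∈ A, ∃ b, ∃ hb : b ∈ B, a = f b hb :=
    Finset.surj_on_of_inj_on_of_card_le f hfA (fun b b' hb hb' => hfinj b hb b' hb') hcard
  have hf_of_adj : ∀ b (hb : b ∈ B), ∀ a ∈ A, G.Adj b a → a = f b hb := by
    intro b hb a ha hba
    obtain ⟨b₀, hb₀, rfl⟩ := hfsurj a ha
    obtain rfl := hA _ ha b₀ hb₀ b hb (hfadj b₀ hb₀).symm hba.symm
    rfl
  refine ⟨fun a ha => ?_, fun b hb => ⟨f b hb, ⟨hfA b hb, hfadj b hb⟩,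
    fun a ⟨ha, hba⟩ => hf_of_adj b hb a ha hba⟩⟩
  obtain ⟨b, hb, rfl⟩ := hfsurj a ha
  exact ⟨b, ⟨hb, (hfadj b hb).symm⟩,
    fun b' ⟨hb', hab'⟩ => hA _ ha b' hb' b hb hab' (hfadj b hb).symm⟩

lemma existsUnique_adj_union_of_mem_left [DecidableEq V] (hA : IsStable G A) {v : V}
    (hv : v ∈ A) (hvB : ∃! b, b ∈ B ∧ G.Adj v b) : ∃! w, w ∈ A ∪ B ∧ G.Adj v w := by
  obtain ⟨b, ⟨hb, hvb⟩, huniq⟩ := hvB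
  refine ⟨b, ⟨Finset.mem_union_right A hb, hvb⟩, fun w ⟨hw, hvw⟩ => ?_⟩
  rcases Finset.mem_union.mp hw with hwA | hwB
  · exact absurd hvw (hA hv hwA)
  · exact huniq w ⟨hwB, hvw⟩

end Bipartite

lemma SquareStable.isMatching_induce_symmDiff [Fintype V] [DecidableEq V] {G : SimpleGraph V}
    (h : SquareStable G) {S₁ S₂ : Finset V} (hS₁ : IsMaxStable G S₁)
    (hS₂ : IsMaxStable (square G) S₂) :
    ((⊤ : G.Subgraph).induce ↑((S₁ \ S₂) ∪ (S₂ \ S₁))).IsMatching := by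
  have hA : IsStable G (S₁ \ S₂) := hS₁.1.subset Finset.sdiff_subset
  have hB : IsStable G (S₂ \ S₁) := hS₂.1.of_square.subset Finset.sdiff_subset
  have hcard : (S₁ \ S₂).card ≤ (S₂ \ S₁).card :=
    (Finset.card_sdiff_comm (by rw [hS₁.2, hS₂.2, h])).le
  have hBA : ∀ b ∈ S₂ \ S₁, ∃ a ∈ S₁ \ S₂, G.Adj b a := by
    intro b hb
    obtain ⟨hb₂, hb₁⟩ := Finset.mem_sdiff.mp hb
    obtain ⟨a, ha, hba⟩ := hS₁.exists_adj_of_notMem hb₁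
    exact ⟨a, Finset.mem_sdiff.mpr ⟨ha, fun ha₂ => hS₂.1.of_square hb₂ ha₂ hba⟩, hba⟩
  obtain ⟨hAB, hBA⟩ := existsUnique_adj_of_card_le hcard hBA fun a _ b hb b' hb' =>
    hS₂.1.eq_of_adj_of_adj_of_square (Finset.sdiff_subset hb) (Finset.sdiff_subset hb')
  rw [Subgraph.isMatching_induce_top_iff]
  intro v hv
  rcases Finset.mem_union.mp (Finset.mem_coe.mp hv) with hvA | hvB
  · exact existsUnique_adj_union_of_mem_left hA hvA (hAB v hvA)
  · rw [Finset.union_comm]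
    exact existsUnique_adj_union_of_mem_left hB hvB (hBA v hvB)

/-- If G is square-stable then for all S₁ ∈ Ω(G), S₂ ∈ Ω(G²), the induced subgraph on
S₁ △ S₂ has a unique perfect matching, and this matching is induced. -/
theorem stmt10 [Fintype V] [DecidableEq V] (G : SimpleGraph V) (h : SquareStable G) :
    ∀ S₁ S₂ : Finset V, IsMaxStable G S₁ → IsMaxStable (square G) S₂ →
      ∃ M : G.Subgraph,
        (M.IsMatching ∧ M.verts = ↑((S₁ \ S₂) ∪ (S₂ \ S₁))) ∧
        (∀ N : G.Subgraph,
          N.IsMatching ∧ N.verts = ↑((S₁ \ S₂) ∪ (S₂ \ S₁)) → N = M) ∧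
        (∀ a b c d : V, M.Adj a b → M.Adj c d → a ≠ c → a ≠ d → ¬ G.Adj a c) := by
  intro S₁ S₂ hS₁ hS₂
  have hM := h.isMatching_induce_symmDiff hS₁ hS₂
  refine ⟨_, ⟨hM, rfl⟩, fun N ⟨hN, hNverts⟩ => ?_,
    fun _ _ _ _ hab hcd _ had => hM.not_adj_of_induce_top hab hcd had⟩
  exact hN.eq_of_le_of_verts_eq hM (hNverts ▸ Subgraph.le_induce_top_verts) hNverts
end

section
/- Every square-stable graph is well-covered: every maximal stable set is a maximum stable set. -/
/-!
A maximal stable set `S` of `G` dominates `G`, so sending each vertex to itself or to a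
neighbour in `S` is a map into `S`. Two distinct vertices with the same image are at distance
at most two, so this map is injective on every stable set of `G²`; hence
`α(G) = α(G²) ≤ |S| ≤ α(G)`.
-/

open SimpleGraph

attribute [local instance] Classical.propDecidable

variable {V : Type*}

theorem card_le_alpha_of_isStable [Fintype V] {G : SimpleGraph V} {T : Finset V}
    (hT : IsStable G T) : T.card ≤ alpha G :=
  Finset.le_sup (Finset.mem_filter.2 ⟨Finset.mem_powerset.2 (Finset.subset_univ T), hT⟩)

theorem exists_isStable_card_eq_alpha [Fintype V] (G : SimpleGraph V) :
    ∃ T : Finset V, IsStable G T ∧ T.card = alpha G := by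
  have hne : (Finset.univ.powerset.filter (fun T => IsStable G T)).Nonempty :=
    ⟨∅, Finset.mem_filter.2 ⟨Finset.empty_mem_powerset _, by simp [IsStable]⟩⟩
  obtain ⟨T, hT, hsup⟩ := Finset.exists_mem_eq_sup _ hne Finset.card
  exact ⟨T, (Finset.mem_filter.1 hT).2, hsup.symm⟩

theorem IsStable.insert {G : SimpleGraph V} {S : Finset V} {a : V} (hS : IsStable G S)
    (ha : ∀ s ∈ S, ¬ G.Adj a s) : IsStable G (insert a S) := by
  intro x hx y hy
  rcases Finset.mem_insert.1 hx with rfl | hx <;> rcases Finset.mem_insert.1 hy with hya | hy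
  · exact hya ▸ G.irrefl
  · exact ha y hy
  · exact fun hxy => ha x hx (hya ▸ hxy.symm)
  · exact hS hx hy

theorem exists_adj_mem_of_maximal {G : SimpleGraph V} {S : Finset V} (hS : IsStable G S)
    (hmax : ∀ T : Finset V, IsStable G T → S ⊆ T → S = T) {a : V} (ha : a ∉ S) :
    ∃ s ∈ S, G.Adj a s := by
  by_contra! hcon
  have hSa := hmax _ (hS.insert hcon) (Finset.subset_insert a S)
  exact ha (hSa ▸ Finset.mem_insert_self a S)

theorem square_adj_of_eq_or_adj {G : SimpleGraph V} {a b s : V} (hab : a ≠ b)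
    (ha : a = s ∨ G.Adj a s) (hb : b = s ∨ G.Adj b s) : (square G).Adj a b := by
  refine ⟨hab, ?_⟩
  rcases ha with rfl | ha <;> rcases hb with rfl | hb
  · exact absurd rfl hab
  · exact Or.inl hb.symm
  · exact Or.inl ha
  · exact Or.inr ⟨s, ha, hb.symm⟩

theorem alpha_square_le_card_of_dominating [Fintype V] {G : SimpleGraph V} {S : Finset V}
    (hdom : ∀ a ∉ S, ∃ s ∈ S, G.Adj a s) : alpha (square G) ≤ S.card := by
  have hnear : ∀ a, ∃ s ∈ S, a = s ∨ G.Adj a s := fun a => by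
    by_cases ha : a ∈ S
    · exact ⟨a, ha, Or.inl rfl⟩
    · obtain ⟨s, hs, has⟩ := hdom a ha
      exact ⟨s, hs, Or.inr has⟩
  choose g hgS hg using hnear
  obtain ⟨W, hW, hWcard⟩ := exists_isStable_card_eq_alpha (square G)
  have hinj : Set.InjOn g W := fun a ha b hb hab => by
    by_contra hne
    exact hW ha hb (square_adj_of_eq_or_adj hne (hg a) (hab ▸ hg b))
  exact hWcard ▸ Finset.card_le_card_of_injOn g (fun a _ => hgS a) hinj

/-- Every square-stable graph without isolated vertices is well-covered. -/
theorem stmt13 [Fintype V] (G : SimpleGraph V)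
    (hiso : ∀ v : V, ∃ w, G.Adj v w) (h : SquareStable G) :
    WellCovered G := by
  refine ⟨hiso, fun S hS hmax => le_antisymm (card_le_alpha_of_isStable hS) ?_⟩
  calc alpha G = alpha (square G) := h
    _ ≤ S.card := alpha_square_le_card_of_dominating fun _ => exists_adj_mem_of_maximal hS hmax
end
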